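/- arXiv:1809.07823 — 5 statements merged into one kernel-verified Lean document; each statement's English description precedes it below -/
import Mathlib

section
/- Let S and A be nonempty finite sets, let P : S → A → S → ℝ be a transition probability function, let R : S → A → ℝ be a reward function, and let γ ∈ [0,1). Let Q* be the unique fixed point of the Bellman Q-operator and v* the unique fixed point of the Bellman optimality operator. Let Pol* : S → A be any deterministic policy that is greedy with respect to Q*, i.e., Q*(s, Pol*(s)) = max_{a ∈ A} Q*(s,a) for every s. Then the value function v^{Pol*} of Pol* (the unique solution of v(s) = R(s, Pol*(s)) + γ · ∑_{s'} P s (Pol*(s)) s' · v(s')) equals v*. -/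
/-- If the sup-distance between `f` and `g` contracts by `γ < 1`, then `f = g`. -/
lemma aux_contract {S : Type*} [Fintype S] [Nonempty S] (γ : ℝ) (hγ0 : 0 ≤ γ) (hγ1 : γ < 1)
    (f g : S → ℝ)
    (h : ∀ s, |f s - g s| ≤
      γ * Finset.univ.sup' Finset.univ_nonempty (fun s => |f s - g s|)) : f = g := by
  set d := Finset.univ.sup' Finset.univ_nonempty (fun s => |f s - g s|) with hd
  have hd0 : 0 ≤ d := by
    obtain ⟨s⟩ := (inferInstance : Nonempty S)
    exact le_trans (abs_nonneg (f s - g s)) (Finset.le_sup' (fun s => |f s - g s|) (Finset.mem_univ s))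
  have hdle : d ≤ γ * d := Finset.sup'_le _ _ (fun s _ => h s)
  have hdz : d ≤ 0 := by nlinarith
  funext s
  have := (h s).trans (by nlinarith : γ * d ≤ 0)
  have := abs_nonneg (f s - g s)
  have : |f s - g s| = 0 := le_antisymm (by linarith) (by linarith)
  have := abs_eq_zero.mp this
  linarith

lemma aux_sup_diff {A : Type*} [Fintype A] [Nonempty A] (f g : A → ℝ) (c : ℝ)
    (h : ∀ a, |f a - g a| ≤ c) :
    |Finset.univ.sup' Finset.univ_nonempty f - Finset.univ.sup' Finset.univ_nonempty g| ≤ c := by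
  rw [abs_sub_le_iff]
  constructor <;>
  · rw [sub_le_iff_le_add]
    apply Finset.sup'_le
    intro a _
    have := abs_le.mp (h a)
    have h2 := Finset.le_sup' (f := fun a => f a) (Finset.mem_univ a)
    have h3 := Finset.le_sup' (f := fun a => g a) (Finset.mem_univ a)
    linarith [this.1, this.2]

/-- A deterministic policy that is greedy w.r.t. the optimal
Q-function `Q*` has value function equal to `v*`. -/
theorem stmt_6 {S A : Type*} [Fintype S] [Fintype A] [Nonempty S] [Nonempty A]
    (P : S → A → S → ℝ) (hP0 : ∀ s a s', 0 ≤ P s a s')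
    (hP1 : ∀ s a, ∑ s', P s a s' = 1)
    (R : S → A → ℝ) (γ : ℝ) (hγ0 : 0 ≤ γ) (hγ1 : γ < 1)
    (Qstar : S × A → ℝ)
    (hQstar : ∀ s a, Qstar (s, a) =
      R s a + γ * ∑ s', P s a s' *
        Finset.univ.sup' Finset.univ_nonempty (fun a' => Qstar (s', a')))
    (vstar : S → ℝ)
    (hvstar : ∀ s, vstar s =
      Finset.univ.sup' Finset.univ_nonempty (fun a => R s a + γ * ∑ s', P s a s' * vstar s'))
    (Pol : S → A)
    (hgreedy : ∀ s, Qstar (s, Pol s) =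
      Finset.univ.sup' Finset.univ_nonempty (fun a => Qstar (s, a)))
    (vPol : S → ℝ)
    (hvPol : ∀ s, vPol s = R s (Pol s) + γ * ∑ s', P s (Pol s) s' * vPol s') :
    vPol = vstar := by
  set w : S → ℝ := fun s => Finset.univ.sup' Finset.univ_nonempty (fun a => Qstar (s, a))
    with hw
  -- w satisfies the policy-evaluation equation for Pol
  have hwPol : ∀ s, w s = R s (Pol s) + γ * ∑ s', P s (Pol s) s' * w s' := by
    intro s
    rw [hw]
    simp only
    rw [← hgreedy s, hQstar s (Pol s)]
  -- w satisfies the Bellman optimality equation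
  have hwopt : ∀ s, w s =
      Finset.univ.sup' Finset.univ_nonempty (fun a => R s a + γ * ∑ s', P s a s' * w s') := by
    intro s
    rw [hw]
    simp only
    exact Finset.sup'_congr _ rfl (fun a _ => hQstar s a)
  -- generic contraction bound for sums
  have sumbound : ∀ (f g : S → ℝ) (a : A) (s : S),
      |(γ * ∑ s', P s a s' * f s') - (γ * ∑ s', P s a s' * g s')| ≤
      γ * Finset.univ.sup' Finset.univ_nonempty (fun s => |f s - g s|) := by
    intro f g a s
    set d := Finset.univ.sup' Finset.univ_nonempty (fun s => |f s - g s|) with hd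
    have : (γ * ∑ s', P s a s' * f s') - (γ * ∑ s', P s a s' * g s')
        = γ * ∑ s', P s a s' * (f s' - g s') := by
      rw [← mul_sub, ← Finset.sum_sub_distrib]
      congr 1; apply Finset.sum_congr rfl; intro s' _; ring
    rw [this, abs_mul, abs_of_nonneg hγ0]
    apply mul_le_mul_of_nonneg_left _ hγ0
    calc |∑ s', P s a s' * (f s' - g s')| ≤ ∑ s', |P s a s' * (f s' - g s')| :=
          Finset.abs_sum_le_sum_abs _ _
      _ ≤ ∑ s', P s a s' * d := by
          apply Finset.sum_le_sum
          intro s' _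
          rw [abs_mul, abs_of_nonneg (hP0 s a s')]
          exact mul_le_mul_of_nonneg_left
            (Finset.le_sup' (f := fun s => |f s - g s|) (Finset.mem_univ s')) (hP0 s a s')
      _ = d := by rw [← Finset.sum_mul, hP1 s a, one_mul]
  -- vPol = w
  have h1 : vPol = w := by
    apply aux_contract γ hγ0 hγ1
    intro s
    rw [hvPol s, hwPol s]
    have := sumbound vPol w (Pol s) s
    calc |(R s (Pol s) + γ * ∑ s', P s (Pol s) s' * vPol s') -
          (R s (Pol s) + γ * ∑ s', P s (Pol s) s' * w s')|
        = |(γ * ∑ s', P s (Pol s) s' * vPol s') - (γ * ∑ s', P s (Pol s) s' * w s')| := by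
          ring_nf
      _ ≤ _ := sumbound vPol w (Pol s) s
  -- vstar = w
  have h2 : vstar = w := by
    apply aux_contract γ hγ0 hγ1
    intro s
    rw [hvstar s, hwopt s]
    apply aux_sup_diff
    intro a
    calc |(R s a + γ * ∑ s', P s a s' * vstar s') - (R s a + γ * ∑ s', P s a s' * w s')|
        = |(γ * ∑ s', P s a s' * vstar s') - (γ * ∑ s', P s a s' * w s')| := by ring_nf
      _ ≤ _ := sumbound vstar w a s
  rw [h1, h2]
end

section
/- Let S and A be nonempty finite sets, let P : S → A → S → ℝ be a transition probability function, let R : S → A → ℝ be a reward function, and let γ ∈ [0,1). Let v* be the unique fixed point of the Bellman optimality operator. Then for every randomized stationary policy Pol, the value function v^{Pol} (the unique solution of v(s) = ∑_a Pol s a · (R s a + γ · ∑_{s'} P s a s' · v s')) satisfies v^{Pol}(s) ≤ v*(s) for every state s ∈ S. -/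
/-- The value function of any randomized stationary policy is
dominated by the unique fixed point `v*` of the Bellman optimality operator. -/
theorem stmt_7 {S A : Type*} [Fintype S] [Fintype A] [Nonempty S] [Nonempty A]
    (P : S → A → S → ℝ) (hP0 : ∀ s a s', 0 ≤ P s a s')
    (hP1 : ∀ s a, ∑ s', P s a s' = 1)
    (R : S → A → ℝ) (γ : ℝ) (hγ0 : 0 ≤ γ) (hγ1 : γ < 1)
    (vstar : S → ℝ)
    (hvstar : ∀ s, vstar s =
      Finset.univ.sup' Finset.univ_nonempty (fun a => R s a + γ * ∑ s', P s a s' * vstar s'))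
    (Pol : S → A → ℝ) (hPol0 : ∀ s a, 0 ≤ Pol s a) (hPol1 : ∀ s, ∑ a, Pol s a = 1)
    (vPol : S → ℝ)
    (hvPol : ∀ s, vPol s = ∑ a, Pol s a * (R s a + γ * ∑ s', P s a s' * vPol s')) :
    ∀ s, vPol s ≤ vstar s := by
  set M : ℝ := Finset.univ.sup' Finset.univ_nonempty (fun s => vPol s - vstar s) with hM
  have hle : ∀ s, vPol s - vstar s ≤ M := by
    intro s
    rw [hM]
    exact Finset.le_sup' (fun s => vPol s - vstar s) (Finset.mem_univ s)
  -- key step: M ≤ γ * M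
  have key : ∀ s, vPol s - vstar s ≤ γ * M := by
    intro s
    have hQ : ∀ a, R s a + γ * ∑ s', P s a s' * vstar s' ≤ vstar s := by
      intro a
      rw [hvstar s]
      exact Finset.le_sup' (fun a => R s a + γ * ∑ s', P s a s' * vstar s') (Finset.mem_univ a)
    have hterm : ∀ a, Pol s a * (R s a + γ * ∑ s', P s a s' * vPol s')
        ≤ Pol s a * (vstar s + γ * M) := by
      intro a
      apply mul_le_mul_of_nonneg_left _ (hPol0 s a)
      have h1 : ∑ s', P s a s' * vPol s' ≤ (∑ s', P s a s' * vstar s') + M := by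
        have : ∑ s', P s a s' * vPol s'
            ≤ ∑ s', (P s a s' * vstar s' + P s a s' * M) := by
          apply Finset.sum_le_sum
          intro s' _
          have := hle s'
          nlinarith [hP0 s a s']
        calc ∑ s', P s a s' * vPol s' ≤ _ := this
          _ = (∑ s', P s a s' * vstar s') + M := by
            rw [Finset.sum_add_distrib, ← Finset.sum_mul, hP1 s a, one_mul]
      have := hQ a
      nlinarith
    have hcalc : vPol s ≤ vstar s + γ * M := by
      calc vPol s = ∑ a, Pol s a * (R s a + γ * ∑ s', P s a s' * vPol s') := hvPol s
        _ ≤ ∑ a, Pol s a * (vstar s + γ * M) := Finset.sum_le_sum (fun a _ => hterm a)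
        _ = vstar s + γ * M := by rw [← Finset.sum_mul, hPol1 s, one_mul]
    linarith
  have hMle : M ≤ γ * M := by
    obtain ⟨s0, _, hs0⟩ := Finset.exists_mem_eq_sup' (Finset.univ_nonempty)
      (fun s => vPol s - vstar s)
    have hMeq : M = vPol s0 - vstar s0 := by rw [hM, hs0]
    calc M = vPol s0 - vstar s0 := hMeq
      _ ≤ γ * M := key s0
  have hM0 : M ≤ 0 := by nlinarith
  intro s
  have := hle s
  linarith
end

section
/- Let S and A be nonempty finite sets, let P : S → A → S → ℝ be a transition probability function, let R : S → A → ℝ be a reward function, and let γ ∈ [0,1). Then there exists a deterministic stationary policy d : S → A that is optimal among all randomized stationary policies: for every randomized stationary policy Pol and every state s ∈ S, v^{Pol}(s) ≤ v^{d}(s), where v^{Pol} and v^{d} are the respective value functions (unique solutions of the corresponding policy-evaluation equations). -/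
open Finset

/-- In a finite-state MDP there exists a deterministic stationary
policy which is optimal among all randomized stationary policies. -/
theorem stmt_8 {S A : Type*} [Fintype S] [Fintype A] [Nonempty S] [Nonempty A]
    (P : S → A → S → ℝ) (hP0 : ∀ s a s', 0 ≤ P s a s')
    (hP1 : ∀ s a, ∑ s', P s a s' = 1)
    (R : S → A → ℝ) (γ : ℝ) (hγ0 : 0 ≤ γ) (hγ1 : γ < 1) :
    ∃ d : S → A,
      ∀ (Pol : S → A → ℝ), (∀ s a, 0 ≤ Pol s a) → (∀ s, ∑ a, Pol s a = 1) →
      ∀ (vPol vd : S → ℝ),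
        (∀ s, vPol s = ∑ a, Pol s a * (R s a + γ * ∑ s', P s a s' * vPol s')) →
        (∀ s, vd s = R s (d s) + γ * ∑ s', P s (d s) s' * vd s') →
        ∀ s, vPol s ≤ vd s := by
  classical
  set K : NNReal := ⟨γ, hγ0⟩ with hKdef
  have hKγ : (K : ℝ) = γ := rfl
  -- Bellman optimality operator
  set f : (S → ℝ) → (S → ℝ) := fun v s =>
    univ.sup' univ_nonempty (fun a => R s a + γ * ∑ s', P s a s' * v s') with hf
  -- key one-step estimate
  have hterm : ∀ (v w : S → ℝ) (s : S) (a : A),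
      (R s a + γ * ∑ s', P s a s' * v s') - (R s a + γ * ∑ s', P s a s' * w s')
        ≤ γ * dist v w := by
    intro v w s a
    have h1 : ∑ s', P s a s' * v s' - ∑ s', P s a s' * w s'
        = ∑ s', P s a s' * (v s' - w s') := by
      rw [← Finset.sum_sub_distrib]
      congr 1; ext s'; ring
    have h2 : ∑ s', P s a s' * (v s' - w s') ≤ ∑ s', P s a s' * dist v w := by
      apply Finset.sum_le_sum
      intro s' _
      apply mul_le_mul_of_nonneg_left _ (hP0 s a s')
      calc v s' - w s' ≤ |v s' - w s'| := le_abs_self _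
        _ = dist (v s') (w s') := (Real.dist_eq _ _).symm
        _ ≤ dist v w := dist_le_pi_dist v w s'
    have h3 : ∑ s', P s a s' * dist v w = dist v w := by
      rw [← Finset.sum_mul, hP1, one_mul]
    nlinarith [mul_le_mul_of_nonneg_left (h2.trans_eq h3) hγ0,
      mul_le_mul_of_nonneg_left ((h1 ▸ h2).trans_eq h3) hγ0]
  have hhalf : ∀ (v w : S → ℝ) (s : S), f v s - f w s ≤ γ * dist v w := by
    intro v w s
    rw [sub_le_iff_le_add]
    apply Finset.sup'_le
    intro a _
    have h1 : R s a + γ * ∑ s', P s a s' * w s' ≤ f w s :=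
      Finset.le_sup' (f := fun a => R s a + γ * ∑ s', P s a s' * w s') (Finset.mem_univ a)
    have := hterm v w s a
    linarith
  have hlip : LipschitzWith K f := by
    apply LipschitzWith.of_dist_le_mul
    intro v w
    rw [dist_pi_le_iff (by positivity)]
    intro s
    rw [Real.dist_eq, abs_sub_le_iff]
    exact ⟨by simpa [hKγ] using hhalf v w s,
      by simpa [hKγ, dist_comm v w] using hhalf w v s⟩
  have hcontr : ContractingWith K f := ⟨by exact_mod_cast hγ1, hlip⟩
  set vstar : S → ℝ := ContractingWith.fixedPoint f hcontr with hvstar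
  have hfix : f vstar = vstar := hcontr.fixedPoint_isFixedPt
  -- greedy policy
  have hgreedy : ∀ s : S, ∃ a : A,
      f vstar s = R s a + γ * ∑ s', P s a s' * vstar s' := by
    intro s
    obtain ⟨a, _, ha⟩ := Finset.exists_mem_eq_sup' (univ_nonempty)
      (fun a => R s a + γ * ∑ s', P s a s' * vstar s')
    exact ⟨a, ha⟩
  choose d hd using hgreedy
  refine ⟨d, ?_⟩
  intro Pol hPol0 hPol1 vPol vd hvPol hvd
  -- vstar satisfies the d-equation
  have hstar_eq : ∀ s, vstar s = R s (d s) + γ * ∑ s', P s (d s) s' * vstar s' := by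
    intro s
    rw [← hd s]
    exact congrFun hfix.symm s
  -- generic smallness lemma
  have hsmall : ∀ (u : S → ℝ), (∀ s, u s ≤ γ * univ.sup' univ_nonempty u) →
      ∀ s, u s ≤ 0 := by
    intro u hu s
    set M := univ.sup' univ_nonempty u with hM
    have hM1 : M ≤ γ * M := Finset.sup'_le _ _ (fun s _ => hu s)
    have hM0 : M ≤ 0 := by nlinarith
    have := hu s
    nlinarith
  -- vd = vstar
  have hvd_eq : ∀ s, vd s = vstar s := by
    have h1 : ∀ s, |vd s - vstar s| ≤
        γ * univ.sup' univ_nonempty (fun s => |vd s - vstar s|) := by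
      intro s
      have hdiff : vd s - vstar s = γ * ∑ s', P s (d s) s' * (vd s' - vstar s') := by
        rw [hvd s, hstar_eq s]
        simp only [mul_sub]
        rw [Finset.sum_sub_distrib]
        ring
      rw [hdiff, abs_mul, abs_of_nonneg hγ0]
      apply mul_le_mul_of_nonneg_left _ hγ0
      calc |∑ s', P s (d s) s' * (vd s' - vstar s')|
          ≤ ∑ s', |P s (d s) s' * (vd s' - vstar s')| := Finset.abs_sum_le_sum_abs _ _
        _ = ∑ s', P s (d s) s' * |vd s' - vstar s'| := by
            congr 1; ext s'; rw [abs_mul, abs_of_nonneg (hP0 _ _ _)]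
        _ ≤ ∑ s', P s (d s) s' * (univ.sup' univ_nonempty (fun s => |vd s - vstar s|)) := by
            apply Finset.sum_le_sum
            intro s' _
            exact mul_le_mul_of_nonneg_left
              (Finset.le_sup' (f := fun s => |vd s - vstar s|) (Finset.mem_univ s')) (hP0 _ _ _)
        _ = _ := by rw [← Finset.sum_mul, hP1, one_mul]
    intro s
    have := hsmall (fun s => |vd s - vstar s|) h1 s
    have := abs_nonneg (vd s - vstar s)
    have : |vd s - vstar s| = 0 := le_antisymm ‹_› ‹_›
    linarith [abs_eq_zero.mp this, sub_eq_zero.mp (abs_eq_zero.mp this)]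
  -- vPol ≤ vstar
  have hle : ∀ s, vPol s - vstar s ≤ 0 := by
    apply hsmall
    intro s
    have hstar_ge : ∀ a, R s a + γ * ∑ s', P s a s' * vstar s' ≤ vstar s := by
      intro a
      calc R s a + γ * ∑ s', P s a s' * vstar s'
          ≤ f vstar s := Finset.le_sup'
            (f := fun a => R s a + γ * ∑ s', P s a s' * vstar s') (Finset.mem_univ a)
        _ = vstar s := congrFun hfix s
    set M := univ.sup' univ_nonempty (fun s => vPol s - vstar s) with hM
    have key : vPol s - vstar s ≤
        ∑ a, Pol s a * (γ * M) := by
      have hexp : vPol s - vstar s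
          = ∑ a, Pol s a * ((R s a + γ * ∑ s', P s a s' * vPol s') - vstar s) := by
        have h' : ∑ a, Pol s a * ((R s a + γ * ∑ s', P s a s' * vPol s') - vstar s)
            = (∑ a, Pol s a * (R s a + γ * ∑ s', P s a s' * vPol s')) - vstar s := by
          simp only [mul_sub]
          rw [Finset.sum_sub_distrib, ← Finset.sum_mul, hPol1, one_mul]
        rw [hvPol s, h']
      rw [hexp]
      apply Finset.sum_le_sum
      intro a _
      apply mul_le_mul_of_nonneg_left _ (hPol0 s a)
      have h1 := hstar_ge a
      have h2 : (R s a + γ * ∑ s', P s a s' * vPol s')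
          - (R s a + γ * ∑ s', P s a s' * vstar s') ≤ γ * M := by
        have hsum : ∑ s', P s a s' * vPol s' - ∑ s', P s a s' * vstar s'
            = ∑ s', P s a s' * (vPol s' - vstar s') := by
          rw [← Finset.sum_sub_distrib]; congr 1; ext s'; ring
        have hb : ∑ s', P s a s' * (vPol s' - vstar s') ≤ ∑ s', P s a s' * M := by
          apply Finset.sum_le_sum
          intro s' _
          exact mul_le_mul_of_nonneg_left
            (Finset.le_sup' (f := fun s => vPol s - vstar s) (Finset.mem_univ s')) (hP0 _ _ _)
        have hc : ∑ s', P s a s' * M = M := by rw [← Finset.sum_mul, hP1, one_mul]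
        nlinarith [mul_le_mul_of_nonneg_left ((hsum ▸ hb).trans_eq hc) hγ0]
      linarith
    calc vPol s - vstar s ≤ ∑ a, Pol s a * (γ * M) := key
      _ = γ * M := by rw [← Finset.sum_mul, hPol1, one_mul]
  intro s
  have := hle s
  rw [hvd_eq s] at *
  linarith [hle s, (hvd_eq s)]
end

section
/- Let Q be a finite set, let f ≥ 2, and let F_1, …, F_f ⊆ Q be pairwise disjoint nonempty subsets (the accepting sets). Define the accepting frontier function Acc(q, 𝔽) for q ∈ Q and 𝔽 ⊆ Q by: Acc(q,𝔽) = 𝔽 \ F_j if q ∈ F_j and 𝔽 ≠ F_j; Acc(q,𝔽) = (⋃_{k=1}^{f} F_k) \ F_j if q ∈ F_j and 𝔽 = F_j; and Acc(q,𝔽) = 𝔽 if q does not belong to any F_j. Given a sequence θ : ℕ → Q, define the accepting frontier sequence by A_0 = ⋃_{k=1}^{f} F_k and A_{n+1} = Acc(θ_n, A_n). If for every j ∈ {1,…,f} the set {n : θ_n ∈ F_j} is infinite (i.e., θ visits every accepting set infinitely often), then the set {n : θ_n ∈ A_n} is infinite (i.e., the agent receives the positive reward at infinitely many steps). -/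
/-- If a run `θ` visits every accepting set `F j` infinitely often,
then the accepting-frontier reward scheme gives a positive reward (i.e. `θ n ∈ A n`)
at infinitely many steps. -/
theorem stmt_12 {Q : Type*} [Fintype Q]
    (f : ℕ) (hf : 2 ≤ f) (F : Fin f → Set Q)
    (hFne : ∀ j, (F j).Nonempty)
    (hFdisj : ∀ j k, j ≠ k → Disjoint (F j) (F k))
    (Acc : Q → Set Q → Set Q)
    (hAcc1 : ∀ (q : Q) (𝔽 : Set Q) (j : Fin f), q ∈ F j → 𝔽 ≠ F j → Acc q 𝔽 = 𝔽 \ F j)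
    (hAcc2 : ∀ (q : Q) (𝔽 : Set Q) (j : Fin f), q ∈ F j → 𝔽 = F j →
      Acc q 𝔽 = (⋃ k, F k) \ F j)
    (hAcc3 : ∀ (q : Q) (𝔽 : Set Q), (∀ j, q ∉ F j) → Acc q 𝔽 = 𝔽)
    (θ : ℕ → Q) (A : ℕ → Set Q)
    (hA0 : A 0 = ⋃ k, F k)
    (hAsucc : ∀ n, A (n + 1) = Acc (θ n) (A n))
    (hbuchi : ∀ j : Fin f, {n : ℕ | θ n ∈ F j}.Infinite) :
    {n : ℕ | θ n ∈ A n}.Infinite := by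
  haveI : Nontrivial (Fin f) := by
    refine Fin.nontrivial_iff_two_le.mpr hf
  have hdiff : ∀ (S : Set (Fin f)) (j : Fin f),
      (⋃ k ∈ S, F k) \ F j = ⋃ k ∈ S \ {j}, F k := by
    intro S j
    ext x
    simp only [Set.mem_diff, Set.mem_iUnion, Set.mem_singleton_iff, exists_prop]
    constructor
    · rintro ⟨⟨k, hkS, hxk⟩, hxj⟩
      exact ⟨k, ⟨hkS, fun h => hxj (h ▸ hxk)⟩, hxk⟩
    · rintro ⟨k, ⟨hkS, hkj⟩, hxk⟩
      exact ⟨⟨k, hkS, hxk⟩, fun hxj => (hFdisj k j hkj).le_bot ⟨hxk, hxj⟩⟩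
  -- invariant: A n is a union of a nonempty collection of accepting sets
  have hinv : ∀ n, ∃ S : Set (Fin f), S.Nonempty ∧ A n = ⋃ k ∈ S, F k := by
    intro n
    induction n with
    | zero =>
      exact ⟨Set.univ, Set.univ_nonempty, by simp [hA0]⟩
    | succ n ih =>
      obtain ⟨S, hSne, hAS⟩ := ih
      by_cases hq : ∃ j, θ n ∈ F j
      · obtain ⟨j, hj⟩ := hq
        by_cases hAF : A n = F j
        · obtain ⟨k, hk⟩ := exists_ne j
          refine ⟨{j}ᶜ, ⟨k, hk⟩, ?_⟩
          rw [hAsucc, hAcc2 _ _ j hj hAF]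
          have : (⋃ k, F k) = ⋃ k ∈ (Set.univ : Set (Fin f)), F k := by simp
          rw [this, hdiff]
          congr 1
          ext a; simp
        · refine ⟨S \ {j}, ?_, ?_⟩
          · by_contra hemp
            rw [Set.not_nonempty_iff_eq_empty, Set.diff_eq_empty] at hemp
            have hSj : S = {j} := Set.Subset.antisymm hemp
              (Set.singleton_subset_iff.mpr (by
                obtain ⟨k, hkS⟩ := hSne
                have := hemp hkS
                simpa using this ▸ hkS))
            apply hAF
            rw [hAS, hSj]
            simp
          · rw [hAsucc, hAcc1 _ _ j hj hAF, hAS, hdiff]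
      · push_neg at hq
        rw [hAsucc, hAcc3 _ _ hq]
        exact ⟨S, hSne, hAS⟩
  by_contra hfin
  rw [Set.not_infinite] at hfin
  obtain ⟨N, hN⟩ := hfin.bddAbove
  have hnot : ∀ n, N < n → θ n ∉ A n := by
    intro n hn hmem
    exact absurd (hN hmem) (not_le.mpr hn)
  -- A is constant from N+1 on
  have hconst : ∀ m, A (N + 1 + m) = A (N + 1) := by
    intro m
    induction m with
    | zero => rfl
    | succ m ih =>
      have hn : N < N + 1 + m := by omega
      set n := N + 1 + m with hndef
      have hθ : θ n ∉ A n := hnot n hn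
      have : A (n + 1) = A n := by
        rw [hAsucc]
        by_cases hq : ∃ j, θ n ∈ F j
        · obtain ⟨j, hj⟩ := hq
          obtain ⟨S, hSne, hAS⟩ := hinv n
          have hjS : j ∉ S := by
            intro hjS
            exact hθ (hAS ▸ Set.mem_biUnion hjS hj)
          have hAF : A n ≠ F j := by
            intro h
            exact hθ (h ▸ hj)
          rw [hAcc1 _ _ j hj hAF, hAS, hdiff, Set.diff_singleton_eq_self hjS]
        · push_neg at hq
          exact hAcc3 _ _ hq
      calc A (N + 1 + (m + 1)) = A (n + 1) := by rw [hndef]; ring_nf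
        _ = A n := this
        _ = A (N + 1) := ih
  obtain ⟨S, hSne, hAS⟩ := hinv (N + 1)
  obtain ⟨j, hjS⟩ := hSne
  obtain ⟨n, hnmem, hn⟩ := (hbuchi j).exists_gt N
  have hn1 : N + 1 ≤ n := hn
  have hAn : A n = A (N + 1) := by
    have := hconst (n - (N + 1))
    rwa [show N + 1 + (n - (N + 1)) = n by omega] at this
  exact hnot n hn (hAn ▸ hAS ▸ Set.mem_biUnion hjS hnmem)
end

section
/- Let Q be a finite set, let f ≥ 2, and let F_1, …, F_f ⊆ Q be pairwise disjoint nonempty subsets (the accepting sets). Define the accepting frontier function Acc(q, 𝔽) by: Acc(q,𝔽) = 𝔽 \ F_j if q ∈ F_j and 𝔽 ≠ F_j; Acc(q,𝔽) = (⋃_{k=1}^{f} F_k) \ F_j if q ∈ F_j and 𝔽 = F_j; and Acc(q,𝔽) = 𝔽 if q does not belong to any F_j. Given a sequence θ : ℕ → Q, define A_0 = ⋃_{k=1}^{f} F_k and A_{n+1} = Acc(θ_n, A_n). If the set {n : θ_n ∈ A_n} is infinite (i.e., the agent receives the positive reward at infinitely many steps), then for every j ∈ {1,…,f} the set {n : θ_n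 ∈ F_j} is infinite (i.e., θ satisfies the generalized Büchi acceptance condition of visiting every accepting set infinitely often). -/
/-!
If `θ` eventually avoids `F j`, look at the steps where the frontier `A n` is some `F k` and `θ n`
lands in it, so that the frontier is reset to `(⋃ F) \ F k`. Such a reset puts `F j` inside the
frontier, and from then on `F j` stays inside it, which rules out any further reset. Hence there
are only finitely many resets, and at every other step the frontier shrinks and loses `θ n`. A
decreasing sequence of subsets of a finite set is eventually constant, so the reward stops.
-/

open Set Function

theorem Set.finite_setOf_mem_of_succ_subset_diff {α : Type*} [Finite α] {A : ℕ → Set α}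
    {x : ℕ → α} {M : ℕ} (h : ∀ n ≥ M, A (n + 1) ⊆ A n \ {x n}) :
    {n | x n ∈ A n}.Finite := by
  have hanti : Antitone fun n => A (M + n) :=
    antitone_nat_of_succ_le fun n => (h (M + n) (by omega)).trans sdiff_subset
  obtain ⟨N, hN⟩ := WellFoundedLT.antitone_chain_condition hanti
  refine (finite_lt_nat (M + N)).subset fun n hn => ?_
  show n < M + N
  by_contra! hle
  have hstable : A (n + 1) = A n := by
    have h1 := hN (n + 1 - M) (by omega)
    have h2 := hN (n - M) (by omega)
    rw [show M + (n + 1 - M) = n + 1 by omega] at h1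
    rw [show M + (n - M) = n by omega] at h2
    exact h1.symm.trans h2
  exact (h n (by omega) (hstable ▸ hn)).2 rfl

section

variable {Q : Type*} {f : ℕ}

theorem eq_of_subset_of_pairwise_disjoint {F : Fin f → Set Q} (hFne : ∀ j, (F j).Nonempty)
    (hF : Pairwise (Disjoint on F)) {j k : Fin f} (hjk : F j ⊆ F k) : j = k := by
  by_contra hne
  obtain ⟨x, hx⟩ := hFne j
  exact disjoint_left.mp (hF hne) hx (hjk hx)

structure IsAcceptingFrontier (F : Fin f → Set Q) (Acc : Q → Set Q → Set Q) : Prop where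
  of_mem_of_ne : ∀ q 𝔽 j, q ∈ F j → 𝔽 ≠ F j → Acc q 𝔽 = 𝔽 \ F j
  of_mem_of_eq : ∀ q 𝔽 j, q ∈ F j → 𝔽 = F j → Acc q 𝔽 = (⋃ k, F k) \ F j
  of_forall_notMem : ∀ q 𝔽, (∀ j, q ∉ F j) → Acc q 𝔽 = 𝔽

namespace IsAcceptingFrontier

variable {F : Fin f → Set Q} {Acc : Q → Set Q → Set Q} {q : Q} {𝔽 : Set Q} {j k : Fin f}

theorem apply_subset_iUnion (hAcc : IsAcceptingFrontier F Acc) (h𝔽 : 𝔽 ⊆ ⋃ k, F k) :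
    Acc q 𝔽 ⊆ ⋃ k, F k := by
  by_cases hq : ∃ k, q ∈ F k
  · obtain ⟨k, hk⟩ := hq
    by_cases h : 𝔽 = F k
    · rw [hAcc.of_mem_of_eq q 𝔽 k hk h]
      exact sdiff_subset
    · rw [hAcc.of_mem_of_ne q 𝔽 k hk h]
      exact sdiff_subset.trans h𝔽
  · push Not at hq
    rwa [hAcc.of_forall_notMem q 𝔽 hq]

theorem apply_subset_diff_singleton (hAcc : IsAcceptingFrontier F Acc) (h𝔽 : 𝔽 ⊆ ⋃ k, F k)
    (hreset : ∀ k, q ∈ F k → 𝔽 ≠ F k) : Acc q 𝔽 ⊆ 𝔽 \ {q} := by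
  by_cases hq : ∃ k, q ∈ F k
  · obtain ⟨k, hk⟩ := hq
    rw [hAcc.of_mem_of_ne q 𝔽 k hk (hreset k hk)]
    exact sdiff_subset_sdiff_right (singleton_subset_iff.mpr hk)
  · push Not at hq
    rw [hAcc.of_forall_notMem q 𝔽 hq, sdiff_singleton_eq_self]
    exact fun hq𝔽 => by simpa [hq] using h𝔽 hq𝔽

theorem subset_apply_of_mem (hAcc : IsAcceptingFrontier F Acc) (hF : Pairwise (Disjoint on F))
    (hq : q ∈ F k) (hjk : j ≠ k) : F j ⊆ Acc q (F k) := by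
  rw [hAcc.of_mem_of_eq q (F k) k hq rfl]
  exact subset_sdiff.mpr ⟨Set.subset_iUnion F j, hF hjk⟩

theorem subset_apply_of_subset (hAcc : IsAcceptingFrontier F Acc) (hF : Pairwise (Disjoint on F))
    (hq : q ∉ F j) (hj : F j ⊆ 𝔽) : F j ⊆ Acc q 𝔽 := by
  by_cases hq' : ∃ k, q ∈ F k
  · obtain ⟨k, hk⟩ := hq'
    have hjk : j ≠ k := fun h => hq (h ▸ hk)
    by_cases h : 𝔽 = F k
    · subst h
      exact hAcc.subset_apply_of_mem hF hk hjk
    · rw [hAcc.of_mem_of_ne q 𝔽 k hk h]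
      exact subset_sdiff.mpr ⟨hj, hF hjk⟩
  · push Not at hq'
    rwa [hAcc.of_forall_notMem q 𝔽 hq']

theorem eventually_forall_ne_of_notMem (hAcc : IsAcceptingFrontier F Acc)
    (hFne : ∀ j, (F j).Nonempty) (hF : Pairwise (Disjoint on F)) {θ : ℕ → Q} {A : ℕ → Set Q}
    (hAsucc : ∀ n, A (n + 1) = Acc (θ n) (A n)) {N : ℕ} (hθ : ∀ n ≥ N, θ n ∉ F j) :
    ∃ M, ∀ n ≥ M, ∀ k, θ n ∈ F k → A n ≠ F k := by
  by_cases h : ∃ n₀ ≥ N, F j ⊆ A n₀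
  · obtain ⟨n₀, hn₀, hsub⟩ := h
    have hpersist : ∀ n ≥ n₀, F j ⊆ A n := fun n hn => by
      induction n, hn using Nat.le_induction with
      | base => exact hsub
      | succ n hn ih => rw [hAsucc]; exact hAcc.subset_apply_of_subset hF (hθ n (by omega)) ih
    refine ⟨n₀, fun n hn k hk heq => hθ n (by omega) ?_⟩
    have hjk : F j ⊆ F k := heq ▸ hpersist n hn
    rwa [eq_of_subset_of_pairwise_disjoint hFne hF hjk]
  · push Not at h
    refine ⟨N, fun n hn k hk heq => h (n + 1) (by omega) ?_⟩
    rw [hAsucc, heq]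
    exact hAcc.subset_apply_of_mem hF hk fun hjk => hθ n hn (hjk ▸ hk)

end IsAcceptingFrontier

end

theorem stmt_13_general {Q : Type*} [Fintype Q]
    (f : ℕ) (F : Fin f → Set Q)
    (hFne : ∀ j, (F j).Nonempty)
    (hFdisj : ∀ j k, j ≠ k → Disjoint (F j) (F k))
    (Acc : Q → Set Q → Set Q)
    (hAcc1 : ∀ (q : Q) (𝔽 : Set Q) (j : Fin f), q ∈ F j → 𝔽 ≠ F j → Acc q 𝔽 = 𝔽 \ F j)
    (hAcc2 : ∀ (q : Q) (𝔽 : Set Q) (j : Fin f), q ∈ F j → 𝔽 = F j →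
      Acc q 𝔽 = (⋃ k, F k) \ F j)
    (hAcc3 : ∀ (q : Q) (𝔽 : Set Q), (∀ j, q ∉ F j) → Acc q 𝔽 = 𝔽)
    (θ : ℕ → Q) (A : ℕ → Set Q)
    (hA0 : A 0 = ⋃ k, F k)
    (hAsucc : ∀ n, A (n + 1) = Acc (θ n) (A n))
    (hreward : {n : ℕ | θ n ∈ A n}.Infinite) :
    ∀ j : Fin f, {n : ℕ | θ n ∈ F j}.Infinite := by
  have hAcc : IsAcceptingFrontier F Acc := ⟨hAcc1, hAcc2, hAcc3⟩
  have hU : ∀ n, A n ⊆ ⋃ k, F k := by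
    intro n
    induction n with
    | zero => rw [hA0]
    | succ n ih => rw [hAsucc]; exact hAcc.apply_subset_iUnion ih
  intro j
  refine infinite_of_forall_exists_gt fun N => ?_
  by_contra! hN
  obtain ⟨M, hM⟩ := hAcc.eventually_forall_ne_of_notMem hFne hFdisj hAsucc
    (N := N + 1) fun n hn hθn => (hN n hθn).not_gt hn
  exact hreward <| finite_setOf_mem_of_succ_subset_diff fun n hn => by
    rw [hAsucc]
    exact hAcc.apply_subset_diff_singleton (hU n) (hM n hn)

/-- If the accepting-frontier reward scheme gives a positive reward
(i.e. `θ n ∈ A n`) at infinitely many steps, then the run `θ` visits every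
accepting set `F j` infinitely often (generalized Büchi acceptance). -/
theorem stmt_13 {Q : Type*} [Fintype Q]
    (f : ℕ) (hf : 2 ≤ f) (F : Fin f → Set Q)
    (hFne : ∀ j, (F j).Nonempty)
    (hFdisj : ∀ j k, j ≠ k → Disjoint (F j) (F k))
    (Acc : Q → Set Q → Set Q)
    (hAcc1 : ∀ (q : Q) (𝔽 : Set Q) (j : Fin f), q ∈ F j → 𝔽 ≠ F j → Acc q 𝔽 = 𝔽 \ F j)
    (hAcc2 : ∀ (q : Q) (𝔽 : Set Q) (j : Fin f), q ∈ F j → 𝔽 = F j →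
      Acc q 𝔽 = (⋃ k, F k) \ F j)
    (hAcc3 : ∀ (q : Q) (𝔽 : Set Q), (∀ j, q ∉ F j) → Acc q 𝔽 = 𝔽)
    (θ : ℕ → Q) (A : ℕ → Set Q)
    (hA0 : A 0 = ⋃ k, F k)
    (hAsucc : ∀ n, A (n + 1) = Acc (θ n) (A n))
    (hreward : {n : ℕ | θ n ∈ A n}.Infinite) :
    ∀ j : Fin f, {n : ℕ | θ n ∈ F j}.Infinite :=
  stmt_13_general f F hFne hFdisj Acc hAcc1 hAcc2 hAcc3 θ A hA0 hAsucc hreward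
end
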